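/- Hereditary substitution at the head position decreases type size: if substitution of M₀ for x₀ at simple type ρ₀ into an atomic object A yields a canonical object M of simple type ρ (i.e., A[M₀/x₀]^o_{ρ₀} = M : ρ), then ρ is a subexpression of ρ₀. -/
import Mathlib


/-! Core development: syntax, hereditary substitution and typing of CLLF_P,
the canonical presentation of the lock-extended logical framework LF. -/

namespace CLLFP

/- Syntax of CLLF_P: kinds, atomic families, canonical families,
atomic objects and canonical objects.  Variables, constants and
predicate names are represented by natural numbers. -/
mutual
  inductive Kd : Type
    | type : Kd
    | pi : Nat → Fm → Kd → Kd
  inductive AFm : Type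
    | const : Nat → AFm
    | app : AFm → Ob → AFm
  inductive Fm : Type
    | atom : AFm → Fm
    | pi : Nat → Fm → Fm → Fm
    | lock : Nat → Ob → Fm → Fm → Fm      -- L^P_{N,σ}[ρ]
  inductive Atm : Type
    | const : Nat → Atm
    | var : Nat → Atm
    | app : Atm → Ob → Atm
    | unlock : Nat → Ob → Fm → Atm → Atm  -- U^P_{N,σ}[A]
  inductive Ob : Type
    | atm : Atm → Ob
    | lam : Nat → Fm → Ob → Ob
    | lock : Nat → Ob → Fm → Ob → Ob      -- L^P_{N,σ}[M]
end

/-- Simple types (the target of the erasure function). -/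
inductive STy : Type
  | base : Nat → STy
  | arr : STy → STy → STy
  | lock : Nat → Ob → Fm → STy → STy

/-- Head constant of an atomic family. -/
def AFm.head : AFm → Nat
  | .const a => a
  | .app α _ => α.head

/-- Erasure of canonical families to simple types. -/
def eraseF : Fm → STy
  | .atom α => .base α.head
  | .pi _ σ τ => .arr (eraseF σ) (eraseF τ)
  | .lock p N σ ρ => .lock p N σ (eraseF ρ)

/- Free-variable relations (x occurs free). -/
mutual
  inductive FvA : Nat → AFm → Prop
    | appL : FvA x α → FvA x (.app α M)
    | appR : FvO x M → FvA x (.app α M)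
  inductive FvF : Nat → Fm → Prop
    | atom : FvA x α → FvF x (.atom α)
    | piL : FvF x σ → FvF x (.pi y σ τ)
    | piR : FvF x τ → x ≠ y → FvF x (.pi y σ τ)
    | lockN : FvO x N → FvF x (.lock p N σ ρ)
    | lockS : FvF x σ → FvF x (.lock p N σ ρ)
    | lockB : FvF x ρ → FvF x (.lock p N σ ρ)
  inductive FvAt : Nat → Atm → Prop
    | var : FvAt x (.var x)
    | appL : FvAt x A → FvAt x (.app A M)
    | appR : FvO x M → FvAt x (.app A M)
    | unlN : FvO x N → FvAt x (.unlock p N σ A)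
    | unlS : FvF x σ → FvAt x (.unlock p N σ A)
    | unlB : FvAt x A → FvAt x (.unlock p N σ A)
  inductive FvO : Nat → Ob → Prop
    | atm : FvAt x A → FvO x (.atm A)
    | lamS : FvF x σ → FvO x (.lam y σ M)
    | lamB : FvO x M → x ≠ y → FvO x (.lam y σ M)
    | lockN : FvO x N → FvO x (.lock p N σ M)
    | lockS : FvF x σ → FvO x (.lock p N σ M)
    | lockB : FvO x M → FvO x (.lock p N σ M)
end

/- Hereditary substitution `T[M₀/x₀]^m_{ρ₀} = T'`, given as mutually
inductive relations, one for each syntactic class.  For atomic objects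
there are two possible outcomes: an atomic object (`HsoA`) or a canonical
object together with its simple type (`HsoH`, the head case). -/
mutual
  inductive HsK : Kd → Ob → Nat → STy → Kd → Prop
    | type : HsK .type M0 x0 r0 .type
    | pi : HsF σ M0 x0 r0 σ' → HsK K M0 x0 r0 K' →
        HsK (.pi x σ K) M0 x0 r0 (.pi x σ' K')
  inductive HsA : AFm → Ob → Nat → STy → AFm → Prop
    | const : HsA (.const a) M0 x0 r0 (.const a)
    | app : HsA α M0 x0 r0 α' → HsO M M0 x0 r0 M' →
        HsA (.app α M) M0 x0 r0 (.app α' M')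
  inductive HsF : Fm → Ob → Nat → STy → Fm → Prop
    | atom : HsA α M0 x0 r0 α' → HsF (.atom α) M0 x0 r0 (.atom α')
    | pi : HsF σ M0 x0 r0 σ' → HsF τ M0 x0 r0 τ' →
        HsF (.pi x σ τ) M0 x0 r0 (.pi x σ' τ')
    | lock : HsF σ M0 x0 r0 σ' → HsO N M0 x0 r0 N' → HsF ρ M0 x0 r0 ρ' →
        HsF (.lock p N σ ρ) M0 x0 r0 (.lock p N' σ' ρ')
  inductive HsoA : Atm → Ob → Nat → STy → Atm → Prop
    | const : HsoA (.const c) M0 x0 r0 (.const c)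
    | var : x ≠ x0 → HsoA (.var x) M0 x0 r0 (.var x)
    | app : HsoA A M0 x0 r0 A' → HsO M M0 x0 r0 M' →
        HsoA (.app A M) M0 x0 r0 (.app A' M')
    | unlock : HsF σ M0 x0 r0 σ' → HsO N M0 x0 r0 N' → HsoA A M0 x0 r0 A' →
        HsoA (.unlock p N σ A) M0 x0 r0 (.unlock p N' σ' A')
  inductive HsoH : Atm → Ob → Nat → STy → Ob → STy → Prop
    | var : HsoH (.var x0) M0 x0 r0 M0 r0
    | app : HsoH A1 M0 x0 r0 (.lam y σ M1) (.arr r2 r) →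
        HsO M2 M0 x0 r0 M2' → HsO M1 M2' y r2 M' →
        HsoH (.app A1 M2) M0 x0 r0 M' r
    | unlock : HsF σ M0 x0 r0 σ' → HsO N M0 x0 r0 N' →
        HsoH A M0 x0 r0 (.lock p N' σ' M1) (.lock p N' σ' r) →
        HsoH (.unlock p N σ A) M0 x0 r0 M1 r
  inductive HsO : Ob → Ob → Nat → STy → Ob → Prop
    | atmA : HsoA A M0 x0 r0 A' → HsO (.atm A) M0 x0 r0 (.atm A')
    | atmH : HsoH A M0 x0 r0 M' r → HsO (.atm A) M0 x0 r0 M'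
    | lam : HsO M M0 x0 r0 M' → HsO (.lam x σ M) M0 x0 r0 (.lam x σ M')
    | lock : HsF σ M0 x0 r0 σ' → HsO N M0 x0 r0 N' → HsO M M0 x0 r0 M' →
        HsO (.lock p N σ M) M0 x0 r0 (.lock p N' σ' M')
end

/-- Contexts: lists of variable/family pairs (most recent binding first). -/
abbrev Ctx := List (Nat × Fm)
/-- Signatures: lists associating constants to kinds or families. -/
abbrev Sig := List (Nat × (Kd ⊕ Fm))

/-- Hereditary substitution in contexts. -/
inductive HsC : Ctx → Ob → Nat → STy → Ctx → Prop
  | nil : HsC [] M0 x0 r0 []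
  | cons : x ≠ x0 → ¬ FvO x M0 → HsC Γ M0 x0 r0 Γ' → HsF σ M0 x0 r0 σ' →
      HsC ((x, σ) :: Γ) M0 x0 r0 ((x, σ') :: Γ')

section Typing
/- The external lock predicates: `sat p Sg Γ N σ` means the predicate named
`p` holds of the checking judgement `Γ ⊢_Sg N ⇐ σ`. -/
variable (sat : Nat → Sig → Ctx → Ob → Fm → Prop)

/- The CLLF_P typing judgements (Figure 2): valid signatures, valid
contexts, kind formation, atomic family synthesis, canonical family
formation, atomic object synthesis and canonical object checking. -/
mutual
  inductive SigOk : Sig → Prop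
    | nil : SigOk []
    | kind : SigOk Sg → WfK Sg [] K → a ∉ Sg.map Prod.fst →
        SigOk ((a, Sum.inl K) :: Sg)
    | type : SigOk Sg → WfF Sg [] σ → c ∉ Sg.map Prod.fst →
        SigOk ((c, Sum.inr σ) :: Sg)
  inductive CtxOk : Sig → Ctx → Prop
    | nil : SigOk Sg → CtxOk Sg []
    | cons : CtxOk Sg Γ → WfF Sg Γ σ → x ∉ Γ.map Prod.fst →
        CtxOk Sg ((x, σ) :: Γ)
  inductive WfK : Sig → Ctx → Kd → Prop
    | type : CtxOk Sg Γ → WfK Sg Γ .type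
    | pi : WfK Sg ((x, σ) :: Γ) K → WfK Sg Γ (.pi x σ K)
  inductive SynA : Sig → Ctx → AFm → Kd → Prop
    | const : CtxOk Sg Γ → Sg.lookup a = some (Sum.inl K) → SynA Sg Γ (.const a) K
    | app : SynA Sg Γ α (.pi x σ K1) → Chk Sg Γ M σ →
        HsK K1 M x (eraseF σ) K → SynA Sg Γ (.app α M) K
  inductive WfF : Sig → Ctx → Fm → Prop
    | atom : SynA Sg Γ α .type → WfF Sg Γ (.atom α)
    | pi : WfF Sg ((x, σ) :: Γ) τ → WfF Sg Γ (.pi x σ τ)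
    | lock : WfF Sg Γ ρ → Chk Sg Γ N σ → WfF Sg Γ (.lock p N σ ρ)
    | nested : WfF Sg ((x, τ) :: Γ) (.lock p S σ ρ) →
        SynO Sg Γ A (.lock p S σ τ) →
        HsF ρ (.atm (.unlock p S σ A)) x (eraseF τ) ρ' →
        WfF Sg Γ (.lock p S σ ρ')
  inductive SynO : Sig → Ctx → Atm → Fm → Prop
    | const : CtxOk Sg Γ → Sg.lookup c = some (Sum.inr σ) → SynO Sg Γ (.const c) σ
    | var : CtxOk Sg Γ → Γ.lookup x = some σ → SynO Sg Γ (.var x) σ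
    | app : SynO Sg Γ A (.pi x σ τ1) → Chk Sg Γ M σ →
        HsF τ1 M x (eraseF σ) τ → SynO Sg Γ (.app A M) τ
    | unlock : SynO Sg Γ A (.lock p N σ ρ) → Chk Sg Γ N σ →
        sat p Sg Γ N σ → SynO Sg Γ (.unlock p N σ A) ρ
  inductive Chk : Sig → Ctx → Ob → Fm → Prop
    | atom : SynO Sg Γ A (.atom α) → Chk Sg Γ (.atm A) (.atom α)
    | abs : Chk Sg ((x, σ) :: Γ) M τ → Chk Sg Γ (.lam x σ M) (.pi x σ τ)
    | lock : Chk Sg Γ M ρ → Chk Sg Γ N σ →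
        Chk Sg Γ (.lock p N σ M) (.lock p N σ ρ)
    | nested : Chk Sg ((x, τ) :: Γ) (.lock p S σ M) (.lock p S σ ρ) →
        SynO Sg Γ A (.lock p S σ τ) →
        HsF ρ (.atm (.unlock p S σ A)) x (eraseF τ) ρ' →
        HsO M (.atm (.unlock p S σ A)) x (eraseF τ) M' →
        Chk Sg Γ (.lock p S σ M') (.lock p S σ ρ')
end

end Typing

/-- A family of lock predicates is *well-behaved* (Definition of
well-behaved predicates for canonical systems) if each predicate is closed
under signature weakening and permutation, closed under context weakening
and permutation, and closed under hereditary substitution. -/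
def WellBehaved (sat : Nat → Sig → Ctx → Ob → Fm → Prop) : Prop :=
  (∀ p Sg Ω Γ N σ, SigOk sat Ω → Sg ⊆ Ω → sat p Sg Γ N σ → sat p Ω Γ N σ) ∧
  (∀ p Sg Γ Δ N σ, CtxOk sat Sg Δ → Γ ⊆ Δ → sat p Sg Γ N σ → sat p Sg Δ N σ) ∧
  (∀ p Sg Γ (x : Nat) σ' Γ' N σ N' Γ'' N'' σ'',
      sat p Sg (Γ' ++ (x, σ') :: Γ) N σ → Chk sat Sg Γ N' σ' →
      HsC Γ' N' x (eraseF σ') Γ'' → HsO N N' x (eraseF σ') N'' →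
      HsF σ N' x (eraseF σ') σ'' →
      sat p Sg (Γ'' ++ Γ) N'' σ'')

end CLLFP


namespace CLLFP

/-- `Subexpr r r'`: the simple type `r` is a (structural) subexpression of `r'`. -/
inductive Subexpr : STy → STy → Prop
  | refl : Subexpr r r
  | arrL : Subexpr r r1 → Subexpr r (.arr r1 r2)
  | arrR : Subexpr r r2 → Subexpr r (.arr r1 r2)
  | lock : Subexpr r r1 → Subexpr r (.lock p N σ r1)

theorem Subexpr.trans' : ∀ {a b c : CLLFP.STy}, CLLFP.Subexpr a b → CLLFP.Subexpr b c → CLLFP.Subexpr a c := by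
  intro a b c h1 h2
  induction h2 with
  | refl => exact h1
  | arrL _ ih => exact .arrL ih
  | arrR _ ih => exact .arrR ih
  | lock _ ih => exact .lock ih

/-- **Head substitution size**: if hereditary substitution of `M₀` for `x₀`
at simple type `ρ₀` into the atomic object `A` yields a canonical object `M`
of simple type `ρ` (i.e. `A[M₀/x₀]^o_{ρ₀} = M : ρ`), then `ρ` is a
subexpression of `ρ₀`. -/
theorem head_substitution_size {A : Atm} {M0 : Ob} {x0 : Nat} {r0 : STy}
    {M : Ob} {r : STy} (h : HsoH A M0 x0 r0 M r) : Subexpr r r0 := by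
  refine HsoH.rec (motive_1 := fun _ _ _ _ _ _ => True) (motive_2 := fun _ _ _ _ _ _ => True)
    (motive_3 := fun _ _ _ _ _ _ => True) (motive_4 := fun _ _ _ _ _ _ => True)
    (motive_5 := fun _ _ _ r0 _ r _ => Subexpr r r0) (motive_6 := fun _ _ _ _ _ _ => True)
    ?_ ?_ ?_ ?_ ?_ ?_ ?_ ?_ ?_ ?_ ?_ ?_ ?_ ?_ ?_ ?_ ?_ ?_ h
  all_goals intros
  all_goals first
    | trivial
    | exact Subexpr.refl
    | exact Subexpr.trans' (.arrR .refl) (by assumption)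
    | exact Subexpr.trans' (.lock .refl) (by assumption)

end CLLFP
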